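/- (Deterministic Lasso ℓ1 rate.) Under the setup of the previous statement (same model, penalty conditions λ/n ≥ c‖S‖_∞, loadings ℓΥ⁰ ≤ Υ ≤ uΥ⁰ with u ≥ 1 ≥ ℓ > 1/c, c > 1, and c₀ = (uc+1)/(ℓc−1)), the Lasso estimator satisfies ‖Υ⁰(β̂ − β₀)‖₁ ≤ 3c₀ (√s/κ_{2c₀}) ( (u + 1/c)λ√s/(n κ_{c₀}) + 2c_s ) + 3c₀ n c_s²/λ, where κ_{c₀} and κ_{2c₀} are the weighted restricted eigenvalues with constants c₀ and 2c₀ respectively, both assumed strictly positive. -/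

import Mathlib

/-- Empirical prediction norm `‖Fδ‖_{2,n} = ((1/n)∑ᵢ (fᵢ'δ)²)^{1/2}`. -/
noncomputable def predNorm (n p : ℕ) (F : Matrix (Fin n) (Fin p) ℝ)
    (δ : Fin p → ℝ) : ℝ :=
  Real.sqrt ((1 / (n : ℝ)) * ∑ i, (∑ j, F i j * δ j) ^ 2)

/-!
Comparing the Lasso objective at `β̂` and at `β₀` gives the basic inequality. Bounding its noise
term through the score condition `λ/n ≥ c‖S‖_∞`, its approximation-error term by Cauchy–Schwarz,
and the penalty difference through the loadings turns it, for `δ = β̂ - β₀`, into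
`‖Fδ‖² - 2 c_s ‖Fδ‖ ≤ (λ/n)((u + 1/c) ‖(Υ⁰δ)_T‖₁ - (ℓ - 1/c) ‖(Υ⁰δ)_{Tᶜ}‖₁)`,
where `u + 1/c = c₀ (ℓ - 1/c)`. Inside the cone of constant `c₀` (resp. `2c₀`) the restricted
eigenvalue converts `‖(Υ⁰δ)_T‖₁` into `√s ‖Fδ‖ / κ`; outside it the right-hand side is negative,
which forces `‖Fδ‖ ≤ 2 c_s` (resp., since `x² - 2 c_s x ≥ -c_s²`, bounds the off-support mass
by a multiple of `n c_s² / λ`).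
-/

open Finset

theorem mul_sum_mul_le_sqrt_mul_sqrt {ι : Type*} [Fintype ι] {w : ℝ} (hw : 0 ≤ w)
    (a b : ι → ℝ) :
    w * ∑ i, a i * b i ≤ √(w * ∑ i, a i ^ 2) * √(w * ∑ i, b i ^ 2) := by
  rw [Real.sqrt_mul hw, Real.sqrt_mul hw, mul_mul_mul_comm, Real.mul_self_sqrt hw]
  exact mul_le_mul_of_nonneg_left (Real.sum_mul_le_sqrt_mul_sqrt _ _ _) hw

theorem sum_mul_le_of_abs_le {ι : Type*} [Fintype ι] {S x : ι → ℝ} {M : ℝ}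
    (hS : ∀ j, |S j| ≤ M) : ∑ j, S j * x j ≤ M * ∑ j, |x j| := by
  rw [mul_sum]
  refine sum_le_sum fun j _ => ?_
  calc S j * x j ≤ |S j| * |x j| := (le_abs_self _).trans_eq (abs_mul _ _)
    _ ≤ M * |x j| := mul_le_mul_of_nonneg_right (hS j) (abs_nonneg _)

section Lasso

variable {ι κ : Type*} [Fintype ι] [Fintype κ] (f : Matrix ι κ ℝ)

theorem two_mul_sum_mul_eq_sum_score {v : ι → ℝ} {w : ℝ} {Υ0 S : κ → ℝ} (δ : κ → ℝ)
    (hΥ0 : ∀ j, Υ0 j ≠ 0) (hS : ∀ j, S j = 2 * (w * ∑ i, f i j * v i) / Υ0 j) :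
    2 * w * ∑ i, v i * ∑ j, f i j * δ j = ∑ j, S j * (Υ0 j * δ j) :=
  calc 2 * w * ∑ i, v i * ∑ j, f i j * δ j = ∑ j, 2 * (w * ∑ i, f i j * v i) * δ j := by
        simp only [mul_sum, sum_mul]
        rw [sum_comm]
        exact sum_congr rfl fun _ _ => sum_congr rfl fun _ _ => by ring
    _ = ∑ j, S j * (Υ0 j * δ j) := sum_congr rfl fun j _ => by rw [hS j]; field_simp [hΥ0 j]

theorem lasso_basic_inequality {d a v : ι → ℝ} {β₀ βhat Υ : κ → ℝ} {w t : ℝ}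
    (hmodel : ∀ i, d i = (∑ j, f i j * β₀ j) + a i + v i)
    (hopt : w * (∑ i, (d i - ∑ j, f i j * βhat j) ^ 2) + t * ∑ j, Υ j * |βhat j|
        ≤ w * (∑ i, (d i - ∑ j, f i j * β₀ j) ^ 2) + t * ∑ j, Υ j * |β₀ j|) :
    w * ∑ i, (∑ j, f i j * (βhat - β₀) j) ^ 2
      ≤ 2 * w * ∑ i, (a i + v i) * ∑ j, f i j * (βhat - β₀) j
        + t * (∑ j, Υ j * |β₀ j| - ∑ j, Υ j * |βhat j|) := by
  have hfit : ∀ i, ∑ j, f i j * (βhat - β₀) j = ∑ j, f i j * βhat j - ∑ j, f i j * β₀ j :=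
    fun i => by simp only [Pi.sub_apply, mul_sub, sum_sub_distrib]
  have hres : ∑ i, (d i - ∑ j, f i j * βhat j) ^ 2
      = ∑ i, (a i + v i) ^ 2 - 2 * ∑ i, (a i + v i) * ∑ j, f i j * (βhat - β₀) j
        + ∑ i, (∑ j, f i j * (βhat - β₀) j) ^ 2 := by
    rw [mul_sum, ← sum_sub_distrib, ← sum_add_distrib]
    exact sum_congr rfl fun i _ => by rw [hfit, hmodel]; ring
  have hres₀ : ∑ i, (d i - ∑ j, f i j * β₀ j) ^ 2 = ∑ i, (a i + v i) ^ 2 :=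
    sum_congr rfl fun i _ => by rw [hmodel]; ring
  rw [hres, hres₀] at hopt
  linear_combination hopt

theorem lasso_penalty_sub_le [DecidableEq κ] {T : Finset κ} {β₀ β Υ w : κ → ℝ} {ℓ u : ℝ}
    (hβ₀ : ∀ j ∉ T, β₀ j = 0) (hw : ∀ j, 0 ≤ w j) (hℓ : 0 ≤ ℓ)
    (hload : ∀ j, ℓ * w j ≤ Υ j ∧ Υ j ≤ u * w j) :
    ∑ j, Υ j * |β₀ j| - ∑ j, Υ j * |β j|
      ≤ u * ∑ j ∈ T, |w j * (β - β₀) j| - ℓ * ∑ j ∈ Tᶜ, |w j * (β - β₀) j| := by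
  have habs : ∀ j, |w j * (β - β₀) j| = w j * |β j - β₀ j| := fun j => by
    rw [abs_mul, abs_of_nonneg (hw j), Pi.sub_apply]
  have hon : ∑ j ∈ T, (Υ j * |β₀ j| - Υ j * |β j|) ≤ ∑ j ∈ T, u * |w j * (β - β₀) j| := by
    refine sum_le_sum fun j _ => ?_
    have hΥ : 0 ≤ Υ j := (mul_nonneg hℓ (hw j)).trans (hload j).1
    calc Υ j * |β₀ j| - Υ j * |β j| ≤ Υ j * |β j - β₀ j| := by
          rw [← mul_sub, abs_sub_comm]
          exact mul_le_mul_of_nonneg_left (abs_sub_abs_le_abs_sub _ _) hΥ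
      _ ≤ u * |w j * (β - β₀) j| := by
          rw [habs, ← mul_assoc]
          exact mul_le_mul_of_nonneg_right (hload j).2 (abs_nonneg _)
  have hoff : ∑ j ∈ Tᶜ, ℓ * |w j * (β - β₀) j| ≤ ∑ j ∈ Tᶜ, (Υ j * |β j| - Υ j * |β₀ j|) := by
    refine sum_le_sum fun j hj => ?_
    rw [habs, hβ₀ j (mem_compl.mp hj), abs_zero, mul_zero, sub_zero, sub_zero, ← mul_assoc]
    exact mul_le_mul_of_nonneg_right (hload j).1 (abs_nonneg _)
  rw [sum_sub_distrib, ← mul_sum] at hon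
  rw [sum_sub_distrib, ← mul_sum] at hoff
  rw [← sum_add_sum_compl T, ← sum_add_sum_compl T (fun j => Υ j * |β j|)]
  linarith

end Lasso

section ConeDichotomy

variable {x cs t A B c0 r κ nT nTc : ℝ}

theorem le_of_sq_sub_le_of_cone (hx : 0 ≤ x) (hcs : 0 ≤ cs) (ht : 0 ≤ t) (hB : 0 ≤ B)
    (hA : 0 ≤ A) (hc0 : c0 * B = A) (hr : 0 ≤ r) (hκ : 0 < κ) (hnTc : 0 ≤ nTc)
    (hkey : x ^ 2 - 2 * cs * x ≤ t * (A * nT - B * nTc))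
    (hre : nTc ≤ c0 * nT → κ * nT ≤ r * x) :
    x ≤ t * A * r / κ + 2 * cs := by
  have hslope : 0 ≤ t * A * r / κ := by positivity
  have hsq : x * x ≤ (t * A * r / κ + 2 * cs) * x := by
    by_cases hcone : nTc ≤ c0 * nT
    · have hnT : nT ≤ r * x / κ := by rw [le_div_iff₀' hκ]; exact hre hcone
      calc x * x ≤ t * (A * nT) + 2 * cs * x := by nlinarith [mul_nonneg ht (mul_nonneg hB hnTc)]
        _ ≤ t * (A * (r * x / κ)) + 2 * cs * x := by gcongr
        _ = (t * A * r / κ + 2 * cs) * x := by ring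
    · have hneg : A * nT - B * nTc ≤ 0 := by
        rw [← hc0]
        nlinarith
      nlinarith [mul_nonneg hslope hx, mul_nonpos_of_nonneg_of_nonpos ht hneg]
  rcases hx.eq_or_lt with rfl | hxpos
  · positivity
  · exact le_of_mul_le_mul_right hsq hxpos

theorem add_le_of_sq_sub_le_of_cone {P : ℝ} (hx : 0 ≤ x) (ht : 0 < t) (hB : 0 ≤ B)
    (hA : 1 ≤ A) (hc0 : c0 * B = A) (hc0one : 1 ≤ c0) (hr : 0 ≤ r) (hκ : 0 < κ) (hnT : 0 ≤ nT)
    (hkey : x ^ 2 - 2 * cs * x ≤ t * (A * nT - B * nTc))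
    (hre : nTc ≤ 2 * c0 * nT → κ * nT ≤ r * x) (hxP : x ≤ P) :
    nT + nTc ≤ 3 * c0 * (r / κ) * P + 3 * c0 * cs ^ 2 / t := by
  by_cases hcone : nTc ≤ 2 * c0 * nT
  · have hnT' : nT ≤ r / κ * x := by rw [div_mul_eq_mul_div, le_div_iff₀' hκ]; exact hre hcone
    calc nT + nTc ≤ 3 * c0 * nT := by nlinarith
      _ ≤ 3 * c0 * (r / κ * x) := by gcongr
      _ ≤ 3 * c0 * (r / κ) * P := by rw [← mul_assoc]; gcongr
      _ ≤ _ := le_add_of_nonneg_right (by positivity)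
  · rw [not_le] at hcone
    have hnTc : 0 ≤ nTc := (by positivity : (0 : ℝ) ≤ 2 * c0 * nT).trans hcone.le
    have hnT' : nT ≤ nTc / 2 := by nlinarith
    have hoff : t * B * nTc ≤ 2 * cs ^ 2 := by
      have hdrop : t * (A * nT - B * nTc) ≤ -(t * B * nTc / 2) := by
        have := mul_le_mul_of_nonneg_left hcone.le (mul_nonneg ht.le hB)
        rw [← hc0]
        linarith
      linarith [sq_nonneg (x - cs)]
    have hoff' : t * nTc ≤ 2 * c0 * cs ^ 2 := by
      calc t * nTc ≤ t * nTc * A := le_mul_of_one_le_right (by positivity) hA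
        _ = c0 * (t * B * nTc) := by rw [← hc0]; ring
        _ ≤ c0 * (2 * cs ^ 2) := by gcongr
        _ = 2 * c0 * cs ^ 2 := by ring
    calc nT + nTc ≤ 3 / 2 * nTc := by linarith
      _ ≤ 3 * c0 * cs ^ 2 / t := by rw [le_div_iff₀ ht]; linarith
      _ ≤ _ := le_add_of_nonneg_left (by have := hx.trans hxP; positivity)

end ConeDichotomy

section PredNorm

variable {n p : ℕ} (f : Matrix (Fin n) (Fin p) ℝ)

theorem predNorm_nonneg (δ : Fin p → ℝ) : 0 ≤ predNorm n p f δ := Real.sqrt_nonneg _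

theorem predNorm_sq (δ : Fin p → ℝ) :
    predNorm n p f δ ^ 2 = 1 / (n : ℝ) * ∑ i, (∑ j, f i j * δ j) ^ 2 :=
  Real.sq_sqrt (by positivity)

noncomputable def restrictedEigenvalue (w : Fin p → ℝ) (T : Finset (Fin p)) (s : ℕ) (C : ℝ) :
    ℝ :=
  sInf {r : ℝ | ∃ δ : Fin p → ℝ, δ ≠ 0 ∧
    (∑ j ∈ Tᶜ, |w j * δ j|) ≤ C * ∑ j ∈ T, |w j * δ j| ∧
    r = Real.sqrt s * predNorm n p f δ / ∑ j ∈ T, |w j * δ j|}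

theorem restrictedEigenvalue_mul_le (w : Fin p → ℝ) (T : Finset (Fin p)) (s : ℕ) {C : ℝ}
    {δ : Fin p → ℝ} (hcone : ∑ j ∈ Tᶜ, |w j * δ j| ≤ C * ∑ j ∈ T, |w j * δ j|) :
    restrictedEigenvalue f w T s C * ∑ j ∈ T, |w j * δ j| ≤ √s * predNorm n p f δ := by
  have hpos : 0 ≤ √s * predNorm n p f δ := mul_nonneg (Real.sqrt_nonneg _) (predNorm_nonneg f δ)
  rcases (sum_nonneg fun j _ => abs_nonneg (w j * δ j) : 0 ≤ ∑ j ∈ T, |w j * δ j|).eq_or_lt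
    with hzero | hsupp
  · rwa [← hzero, mul_zero]
  have hδ : δ ≠ 0 := by
    rintro rfl
    simp at hsupp
  rw [← le_div_iff₀ hsupp]
  refine csInf_le ⟨0, ?_⟩ ⟨δ, hδ, hcone, rfl⟩
  rintro r ⟨δ', -, -, rfl⟩
  exact div_nonneg (mul_nonneg (Real.sqrt_nonneg _) (predNorm_nonneg f δ')) (by positivity)

end PredNorm

theorem lasso_key_inequality {n p : ℕ} (f : Matrix (Fin n) (Fin p) ℝ) {β₀ βhat : Fin p → ℝ}
    {T : Finset (Fin p)} (hβ₀ : ∀ j ∉ T, β₀ j = 0) {d a v : Fin n → ℝ}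
    (hmodel : ∀ i, d i = (∑ j, f i j * β₀ j) + a i + v i) {cs : ℝ}
    (hcs : √(1 / (n : ℝ) * ∑ i, a i ^ 2) ≤ cs) {Υ0 Υ S : Fin p → ℝ} (hΥ0 : ∀ j, 0 < Υ0 j)
    {c ℓ u lam : ℝ} (hc : 0 < c) (hℓ : 0 ≤ ℓ) (hlam0 : 0 ≤ lam)
    (hload : ∀ j, ℓ * Υ0 j ≤ Υ j ∧ Υ j ≤ u * Υ0 j)
    (hS : ∀ j, S j = 2 * ((1 / (n : ℝ)) * ∑ i, f i j * v i) / Υ0 j)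
    (hlam : ∀ j, c * |S j| ≤ lam / n)
    (hopt : (1 / (n : ℝ)) * (∑ i, (d i - ∑ j, f i j * βhat j) ^ 2)
          + (lam / n) * ∑ j, Υ j * |βhat j|
        ≤ (1 / (n : ℝ)) * (∑ i, (d i - ∑ j, f i j * β₀ j) ^ 2)
          + (lam / n) * ∑ j, Υ j * |β₀ j|) :
    predNorm n p f (βhat - β₀) ^ 2 - 2 * cs * predNorm n p f (βhat - β₀)
      ≤ lam / n * ((u + 1 / c) * ∑ j ∈ T, |Υ0 j * (βhat - β₀) j|
        - (ℓ - 1 / c) * ∑ j ∈ Tᶜ, |Υ0 j * (βhat - β₀) j|) := by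
  set δ := βhat - β₀
  have hbasic := lasso_basic_inequality f hmodel hopt
  rw [← predNorm_sq] at hbasic
  simp only [add_mul, sum_add_distrib] at hbasic
  have happrox : 1 / (n : ℝ) * ∑ i, a i * ∑ j, f i j * δ j ≤ cs * predNorm n p f δ :=
    (mul_sum_mul_le_sqrt_mul_sqrt (by positivity) _ _).trans
      (mul_le_mul_of_nonneg_right hcs (predNorm_nonneg f δ))
  have hscore : 2 * (1 / (n : ℝ)) * ∑ i, v i * ∑ j, f i j * δ j
      ≤ lam / n / c * (∑ j ∈ T, |Υ0 j * δ j| + ∑ j ∈ Tᶜ, |Υ0 j * δ j|) := by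
    rw [two_mul_sum_mul_eq_sum_score f δ (fun j => (hΥ0 j).ne') hS, sum_add_sum_compl]
    exact sum_mul_le_of_abs_le fun j => (le_div_iff₀' hc).mpr (hlam j)
  have hpen := mul_le_mul_of_nonneg_left
    (lasso_penalty_sub_le (β := βhat) hβ₀ (fun j => (hΥ0 j).le) hℓ hload)
    (by positivity : 0 ≤ lam / n)
  linear_combination hbasic + 2 * happrox + hscore + hpen

theorem lasso_c0_mul_gap {c ℓ u c0 : ℝ} (hc : 0 < c) (hℓc : 1 / c < ℓ)
    (hc0 : c0 = (u * c + 1) / (ℓ * c - 1)) : c0 * (ℓ - 1 / c) = u + 1 / c := by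
  have hne : ℓ * c - 1 ≠ 0 := by
    rw [div_lt_iff₀ hc] at hℓc
    linarith
  rw [hc0, div_mul_eq_mul_div, div_eq_iff hne]
  field_simp

theorem one_le_lasso_c0 {c ℓ u c0 : ℝ} (hc : 0 < c) (hu : 1 ≤ u) (hℓ1 : ℓ ≤ 1)
    (hℓc : 1 / c < ℓ) (hc0 : c0 = (u * c + 1) / (ℓ * c - 1)) : 1 ≤ c0 := by
  refine le_of_mul_le_mul_right ?_ (sub_pos.mpr hℓc)
  rw [lasso_c0_mul_gap hc hℓc hc0, one_mul]
  linarith [one_div_pos.mpr hc]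

theorem lasso_ell1_rate_general
    (n p s : ℕ) (hn : 0 < n)
    (f : Matrix (Fin n) (Fin p) ℝ)
    (β₀ : Fin p → ℝ) (T : Finset (Fin p))
    (hT : T = Finset.univ.filter (fun j => β₀ j ≠ 0))
    (d a v : Fin n → ℝ)
    (hmodel : ∀ i, d i = (∑ j, f i j * β₀ j) + a i + v i)
    (cs : ℝ)
    (hcs : Real.sqrt ((1 / (n : ℝ)) * ∑ i, (a i) ^ 2) ≤ cs)
    (Υ0 Υ : Fin p → ℝ) (hΥ0 : ∀ j, 0 < Υ0 j)
    (c ℓ u lam : ℝ) (hc : 1 < c) (hu : 1 ≤ u) (hℓ1 : ℓ ≤ 1) (hℓc : 1 / c < ℓ)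
    (hlampos : 0 < lam)
    (hload : ∀ j, ℓ * Υ0 j ≤ Υ j ∧ Υ j ≤ u * Υ0 j)
    (S : Fin p → ℝ)
    (hS : ∀ j, S j = 2 * ((1 / (n : ℝ)) * ∑ i, f i j * v i) / Υ0 j)
    (hlam : ∀ j, c * |S j| ≤ lam / n)
    (βhat : Fin p → ℝ)
    (hopt : ∀ β : Fin p → ℝ,
      (1 / (n : ℝ)) * (∑ i, (d i - ∑ j, f i j * βhat j) ^ 2)
          + (lam / n) * ∑ j, Υ j * |βhat j|
        ≤ (1 / (n : ℝ)) * (∑ i, (d i - ∑ j, f i j * β j) ^ 2)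
          + (lam / n) * ∑ j, Υ j * |β j|)
    (c0 κ1 κ2 : ℝ) (hc0 : c0 = (u * c + 1) / (ℓ * c - 1))
    (hκ1 : κ1 = sInf {r : ℝ | ∃ δ : Fin p → ℝ, δ ≠ 0 ∧
      (∑ j ∈ Tᶜ, |Υ0 j * δ j|) ≤ c0 * ∑ j ∈ T, |Υ0 j * δ j| ∧
      r = Real.sqrt s * predNorm n p f δ / ∑ j ∈ T, |Υ0 j * δ j|})
    (hκ2 : κ2 = sInf {r : ℝ | ∃ δ : Fin p → ℝ, δ ≠ 0 ∧
      (∑ j ∈ Tᶜ, |Υ0 j * δ j|) ≤ (2 * c0) * ∑ j ∈ T, |Υ0 j * δ j| ∧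
      r = Real.sqrt s * predNorm n p f δ / ∑ j ∈ T, |Υ0 j * δ j|})
    (hκ1pos : 0 < κ1) (hκ2pos : 0 < κ2) :
    (∑ j, Υ0 j * |βhat j - β₀ j|)
      ≤ 3 * c0 * (Real.sqrt s / κ2)
          * ((u + 1 / c) * (lam * Real.sqrt s) / (n * κ1) + 2 * cs)
        + 3 * c0 * n * cs ^ 2 / lam := by
  have hc' : 0 < c := one_pos.trans hc
  have hℓ : 0 ≤ ℓ := (one_div_pos.mpr hc').le.trans hℓc.le
  have hB : 0 ≤ ℓ - 1 / c := (sub_pos.mpr hℓc).le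
  have hA : 1 ≤ u + 1 / c := by linarith [one_div_pos.mpr hc']
  have hc0gap := lasso_c0_mul_gap hc' hℓc hc0
  have hcs0 : 0 ≤ cs := (Real.sqrt_nonneg _).trans hcs
  have hβ₀ : ∀ j ∉ T, β₀ j = 0 := fun j hj => by simpa [hT] using hj
  set δ := βhat - β₀
  have hkey := lasso_key_inequality f hβ₀ hmodel hcs hΥ0 hc' hℓ hlampos.le hload hS hlam (hopt β₀)
  have hre : ∀ C κ, κ = restrictedEigenvalue f Υ0 T s C →
      ∑ j ∈ Tᶜ, |Υ0 j * δ j| ≤ C * ∑ j ∈ T, |Υ0 j * δ j| →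
      κ * ∑ j ∈ T, |Υ0 j * δ j| ≤ √s * predNorm n p f δ :=
    fun C κ hκ hcone => hκ ▸ restrictedEigenvalue_mul_le f Υ0 T s hcone
  have hpred : predNorm n p f δ ≤ (u + 1 / c) * (lam * √s) / (n * κ1) + 2 * cs :=
    (le_of_sq_sub_le_of_cone (predNorm_nonneg f δ) hcs0 (by positivity) hB (by linarith)
      hc0gap (Real.sqrt_nonneg _) hκ1pos (sum_nonneg fun j _ => abs_nonneg _) hkey
      (hre c0 κ1 hκ1)).trans_eq (by field_simp)
  have hl1 := add_le_of_sq_sub_le_of_cone (predNorm_nonneg f δ) (by positivity) hB hA hc0gap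
    (one_le_lasso_c0 hc' hu hℓ1 hℓc hc0) (Real.sqrt_nonneg _) hκ2pos
    (sum_nonneg fun j _ => abs_nonneg _) hkey (hre (2 * c0) κ2 hκ2) hpred
  calc ∑ j, Υ0 j * |βhat j - β₀ j| = ∑ j ∈ T, |Υ0 j * δ j| + ∑ j ∈ Tᶜ, |Υ0 j * δ j| := by
        rw [sum_add_sum_compl]
        exact sum_congr rfl fun j _ => by rw [abs_mul, abs_of_pos (hΥ0 j)]; rfl
    _ ≤ _ := hl1.trans_eq (by field_simp)

/-- Deterministic Lasso ℓ1 rate (Lemma 6, second claim):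
`‖Υ⁰(β̂ − β₀)‖₁ ≤ 3c₀(√s/κ_{2c₀})((u + 1/c)λ√s/(nκ_{c₀}) + 2c_s) + 3c₀ n c_s²/λ`. -/
theorem lasso_ell1_rate
    (n p s : ℕ) (hn : 0 < n)
    (f : Matrix (Fin n) (Fin p) ℝ)
    (β₀ : Fin p → ℝ) (T : Finset (Fin p))
    (hT : T = Finset.univ.filter (fun j => β₀ j ≠ 0)) (hTs : T.card ≤ s)
    (d a v : Fin n → ℝ)
    (hmodel : ∀ i, d i = (∑ j, f i j * β₀ j) + a i + v i)
    (cs : ℝ) (hcs0 : 0 ≤ cs)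
    (hcs : Real.sqrt ((1 / (n : ℝ)) * ∑ i, (a i) ^ 2) ≤ cs)
    (Υ0 Υ : Fin p → ℝ) (hΥ0 : ∀ j, 0 < Υ0 j)
    (c ℓ u lam : ℝ) (hc : 1 < c) (hu : 1 ≤ u) (hℓ1 : ℓ ≤ 1) (hℓc : 1 / c < ℓ)
    (hlampos : 0 < lam)
    (hload : ∀ j, ℓ * Υ0 j ≤ Υ j ∧ Υ j ≤ u * Υ0 j)
    (S : Fin p → ℝ)
    (hS : ∀ j, S j = 2 * ((1 / (n : ℝ)) * ∑ i, f i j * v i) / Υ0 j)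
    (hlam : ∀ j, c * |S j| ≤ lam / n)
    (βhat : Fin p → ℝ)
    (hopt : ∀ β : Fin p → ℝ,
      (1 / (n : ℝ)) * (∑ i, (d i - ∑ j, f i j * βhat j) ^ 2)
          + (lam / n) * ∑ j, Υ j * |βhat j|
        ≤ (1 / (n : ℝ)) * (∑ i, (d i - ∑ j, f i j * β j) ^ 2)
          + (lam / n) * ∑ j, Υ j * |β j|)
    (c0 κ1 κ2 : ℝ) (hc0 : c0 = (u * c + 1) / (ℓ * c - 1))
    (hκ1 : κ1 = sInf {r : ℝ | ∃ δ : Fin p → ℝ, δ ≠ 0 ∧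
      (∑ j ∈ Tᶜ, |Υ0 j * δ j|) ≤ c0 * ∑ j ∈ T, |Υ0 j * δ j| ∧
      r = Real.sqrt s * predNorm n p f δ / ∑ j ∈ T, |Υ0 j * δ j|})
    (hκ2 : κ2 = sInf {r : ℝ | ∃ δ : Fin p → ℝ, δ ≠ 0 ∧
      (∑ j ∈ Tᶜ, |Υ0 j * δ j|) ≤ (2 * c0) * ∑ j ∈ T, |Υ0 j * δ j| ∧
      r = Real.sqrt s * predNorm n p f δ / ∑ j ∈ T, |Υ0 j * δ j|})
    (hκ1pos : 0 < κ1) (hκ2pos : 0 < κ2) :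
    (∑ j, Υ0 j * |βhat j - β₀ j|)
      ≤ 3 * c0 * (Real.sqrt s / κ2)
          * ((u + 1 / c) * (lam * Real.sqrt s) / (n * κ1) + 2 * cs)
        + 3 * c0 * n * cs ^ 2 / lam :=
  lasso_ell1_rate_general n p s hn f β₀ T hT d a v hmodel cs hcs Υ0 Υ hΥ0 c ℓ u lam hc hu hℓ1 hℓc
    hlampos hload S hS hlam βhat hopt c0 κ1 κ2 hc0 hκ1 hκ2 hκ1pos hκ2pos
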